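/- Let D be a bounded strictly positive operator and T_t = D_t^{-1} − D^{-1} trace class. For fixed t, the set J_t = {α ∈ ℝ : D^{-1} + α T_t > 0} is an open interval. If moreover there is a unitary involution θ with θL = −Lθ and θD = Dθ, then J_t = J_{−t} and J_t is symmetric about α = 1/2: α ∈ J_t iff 1−α ∈ J_t. -/

import Mathlib

/-!
Being bounded below by a positive constant is an open convex condition on operators, and `J_t`
is its preimage under the affine line `α ↦ D⁻¹ + α T_t`. The condition is also invariant under
congruence `A ↦ S* A S` by an invertible `S`. Since `D_t = e^{tL} D e^{tL}*` and `D_t` is a flow,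
congruence by `e^{tL}` sends `D_t⁻¹ ↦ D⁻¹` and `D⁻¹ ↦ D_{-t}⁻¹`, so it maps the point `1 - α` of
the line through `D⁻¹, D_t⁻¹` to the point `α` of the line through `D⁻¹, D_{-t}⁻¹`. The
involution `θ` is self-adjoint and conjugates `e^{tL}` to `e^{-tL}` while commuting with `D`, so
congruence by `θ` fixes `D⁻¹` and exchanges `D_t⁻¹` with `D_{-t}⁻¹`; hence `J_{-t} = J_t`, and
together with the above, `α ∈ J_t ↔ 1 - α ∈ J_t`.
-/

open NormedSpace RealInnerProductSpace

/-- `D_t = e^{tL} D e^{tL*}`. -/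
noncomputable def Dt {H : Type*} [NormedAddCommGroup H] [InnerProductSpace ℝ H]
    [CompleteSpace H] (L D : H →L[ℝ] H) (t : ℝ) : H →L[ℝ] H :=
  exp (t • L) * D * ContinuousLinearMap.adjoint (exp (t • L))

/-- `J_t = {α ∈ ℝ | D⁻¹ + α T_t > 0}`, where `T_t = D_t⁻¹ − D⁻¹` and `> 0` means
bounded below by a positive constant.  Here `Dinv t` is the inverse of `D_t`, so
`Dinv 0 = D⁻¹`. -/
def Jset {H : Type*} [NormedAddCommGroup H] [InnerProductSpace ℝ H] [CompleteSpace H]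
    (Dinv : ℝ → H →L[ℝ] H) (t : ℝ) : Set ℝ :=
  {α : ℝ | ∃ c > 0, ∀ x : H, c * ‖x‖ ^ 2 ≤ ⟪x, (Dinv 0 + α • (Dinv t - Dinv 0)) x⟫}

theorem star_mul_mul_eq_of_conj {M : Type*} [Monoid M] [StarMul M] {u a b a' b' : M}
    (hu : IsUnit u) (hab : a * b = 1) (hb'a' : b' * a' = 1) (ha' : a' = u * a * star u) :
    star u * b' * u = b := by
  refine left_inv_eq_right_inv ?_ hab
  rw [← hu.star.mul_left_inj, one_mul]
  calc star u * b' * u * a * star u = star u * (b' * a') := by rw [ha']; simp only [mul_assoc]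
    _ = star u := by rw [hb'a', mul_one]

theorem mul_lineMap_mul {R A : Type*} [CommRing R] [Ring A] [Algebra R A] (a b P Q : A) (α : R) :
    a * AffineMap.lineMap P Q α * b = AffineMap.lineMap (a * P * b) (a * Q * b) α := by
  simp only [AffineMap.lineMap_apply_module', mul_add, add_mul, mul_sub, sub_mul,
    mul_smul_comm, smul_mul_assoc]

section UniformlyPositive

variable {H : Type*} [NormedAddCommGroup H] [InnerProductSpace ℝ H]

def IsUniformlyPositive (A : H →L[ℝ] H) : Prop :=
  ∃ c > 0, ∀ x : H, c * ‖x‖ ^ 2 ≤ ⟪x, A x⟫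

theorem isOpen_setOf_isUniformlyPositive : IsOpen {A : H →L[ℝ] H | IsUniformlyPositive A} := by
  refine Metric.isOpen_iff.2 fun A ⟨c, hc, hA⟩ => ⟨c / 2, half_pos hc, fun B hB => ?_⟩
  rw [Metric.mem_ball, dist_eq_norm] at hB
  refine ⟨c / 2, half_pos hc, fun x => ?_⟩
  have hdiff : ⟪x, (A - B) x⟫ ≤ ‖A - B‖ * ‖x‖ ^ 2 :=
    calc ⟪x, (A - B) x⟫ ≤ ‖x‖ * ‖(A - B) x‖ := real_inner_le_norm _ _
      _ ≤ ‖x‖ * (‖A - B‖ * ‖x‖) := by gcongr; exact (A - B).le_opNorm x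
      _ = ‖A - B‖ * ‖x‖ ^ 2 := by ring
  have hsplit : ⟪x, B x⟫ = ⟪x, A x⟫ - ⟪x, (A - B) x⟫ := by
    simp only [sub_apply, inner_sub_right, sub_sub_cancel]
  rw [norm_sub_rev] at hB
  nlinarith [hA x, sq_nonneg ‖x‖]

theorem convex_setOf_isUniformlyPositive :
    Convex ℝ {A : H →L[ℝ] H | IsUniformlyPositive A} := by
  rintro A ⟨c₁, hc₁, hA⟩ B ⟨c₂, hc₂, hB⟩ a b ha hb hab
  refine ⟨min c₁ c₂, lt_min hc₁ hc₂, fun x => ?_⟩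
  have h₁ : min c₁ c₂ * ‖x‖ ^ 2 ≤ ⟪x, A x⟫ := (hA x).trans' (by gcongr; exact min_le_left _ _)
  have h₂ : min c₁ c₂ * ‖x‖ ^ 2 ≤ ⟪x, B x⟫ := (hB x).trans' (by gcongr; exact min_le_right _ _)
  simp only [add_apply, smul_apply, inner_add_right, real_inner_smul_right]
  calc min c₁ c₂ * ‖x‖ ^ 2 = a * (min c₁ c₂ * ‖x‖ ^ 2) + b * (min c₁ c₂ * ‖x‖ ^ 2) := by
        rw [← add_mul, hab, one_mul]
    _ ≤ a * ⟪x, A x⟫ + b * ⟪x, B x⟫ := by gcongr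

variable [CompleteSpace H]

theorem IsUniformlyPositive.star_mul_mul {A S S' : H →L[ℝ] H} (hA : IsUniformlyPositive A)
    (hS : S' * S = 1) : IsUniformlyPositive (star S * A * S) := by
  obtain ⟨c, hc, hA⟩ := hA
  refine ⟨c / (‖S'‖ + 1) ^ 2, by positivity, fun x => ?_⟩
  have hx : ‖x‖ ≤ (‖S'‖ + 1) * ‖S x‖ :=
    calc ‖x‖ = ‖S' (S x)‖ := by rw [← mul_apply_eq_comp, hS, one_apply_eq_self]
      _ ≤ ‖S'‖ * ‖S x‖ := S'.le_opNorm _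
      _ ≤ (‖S'‖ + 1) * ‖S x‖ := by gcongr; linarith
  have hinner : ⟪x, (star S * A * S) x⟫ = ⟪S x, A (S x)⟫ := by
    simp [ContinuousLinearMap.star_eq_adjoint, ContinuousLinearMap.adjoint_inner_right]
  calc c / (‖S'‖ + 1) ^ 2 * ‖x‖ ^ 2 ≤ c / (‖S'‖ + 1) ^ 2 * ((‖S'‖ + 1) * ‖S x‖) ^ 2 := by gcongr
    _ = c * ‖S x‖ ^ 2 := by field_simp
    _ ≤ _ := hinner ▸ hA _

theorem isUniformlyPositive_star_mul_mul_iff {A S : H →L[ℝ] H} (hS : IsUnit S) :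
    IsUniformlyPositive (star S * A * S) ↔ IsUniformlyPositive A := by
  obtain ⟨S, rfl⟩ := hS
  refine ⟨fun h => ?_, fun h => h.star_mul_mul S.inv_mul⟩
  have := h.star_mul_mul S.mul_inv
  rwa [← mul_assoc, ← mul_assoc, ← star_mul, S.mul_inv, star_one, one_mul, mul_assoc, S.mul_inv,
    mul_one] at this

end UniformlyPositive

section Jset

variable {H : Type*} [NormedAddCommGroup H] [InnerProductSpace ℝ H] [CompleteSpace H]

theorem mem_Jset_iff (Dinv : ℝ → H →L[ℝ] H) (t α : ℝ) :
    α ∈ Jset Dinv t ↔ IsUniformlyPositive (AffineMap.lineMap (Dinv 0) (Dinv t) α) := by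
  rw [AffineMap.lineMap_apply_module', add_comm]
  rfl

theorem Jset_eq_preimage (Dinv : ℝ → H →L[ℝ] H) (t : ℝ) :
    Jset Dinv t = AffineMap.lineMap (Dinv 0) (Dinv t) ⁻¹' {A | IsUniformlyPositive A} :=
  Set.ext (mem_Jset_iff Dinv t)

theorem isOpen_Jset (Dinv : ℝ → H →L[ℝ] H) (t : ℝ) : IsOpen (Jset Dinv t) :=
  Jset_eq_preimage Dinv t ▸ isOpen_setOf_isUniformlyPositive.preimage AffineMap.lineMap_continuous

theorem convex_Jset (Dinv : ℝ → H →L[ℝ] H) (t : ℝ) : Convex ℝ (Jset Dinv t) :=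
  Jset_eq_preimage Dinv t ▸ convex_setOf_isUniformlyPositive.affine_preimage _

theorem mem_Jset_iff_of_star_mul_mul {Dinv : ℝ → H →L[ℝ] H} {t : ℝ} {S : H →L[ℝ] H}
    (hS : IsUnit S) {P Q : H →L[ℝ] H} (hP : star S * P * S = Dinv 0) (hQ : star S * Q * S = Dinv t)
    (α : ℝ) : α ∈ Jset Dinv t ↔ IsUniformlyPositive (AffineMap.lineMap P Q α) := by
  rw [mem_Jset_iff, ← hP, ← hQ, ← mul_lineMap_mul, isUniformlyPositive_star_mul_mul_iff hS]

end Jset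

section Dt

variable {H : Type*} [NormedAddCommGroup H] [InnerProductSpace ℝ H] [CompleteSpace H]

theorem Dt_eq_mul_star (L D : H →L[ℝ] H) (t : ℝ) :
    Dt L D t = exp (t • L) * D * star (exp (t • L)) := by
  rw [ContinuousLinearMap.star_eq_adjoint]
  rfl

theorem isUnit_exp_smul (L : H →L[ℝ] H) (t : ℝ) : IsUnit (exp (t • L)) :=
  let : NormedAlgebra ℚ (H →L[ℝ] H) := NormedAlgebra.restrictScalars ℚ ℝ _
  isUnit_exp _

theorem Dt_zero (L D : H →L[ℝ] H) : Dt L D 0 = D := by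
  rw [Dt_eq_mul_star, zero_smul, exp_zero, star_one, one_mul, mul_one]

theorem Dt_Dt (L D : H →L[ℝ] H) (s t : ℝ) : Dt L (Dt L D s) t = Dt L D (t + s) := by
  let : NormedAlgebra ℚ (H →L[ℝ] H) := NormedAlgebra.restrictScalars ℚ ℝ _
  have hexp : exp ((t + s) • L) = exp (t • L) * exp (s • L) := by
    rw [add_smul, exp_add_of_commute ((Commute.refl L).smul_left t |>.smul_right s)]
  simp only [Dt_eq_mul_star, hexp, star_mul, mul_assoc]

theorem semiconjBy_Dt {L D θ : H →L[ℝ] H} (hθ : star θ = θ) (hθL : θ * L = -(L * θ))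
    (hθD : θ * D = D * θ) (t : ℝ) : SemiconjBy θ (Dt L D t) (Dt L D (-t)) := by
  let : NormedAlgebra ℚ (H →L[ℝ] H) := NormedAlgebra.restrictScalars ℚ ℝ _
  have hexp (s : ℝ) : SemiconjBy θ (exp (s • L)) (exp ((-s) • L)) := by
    refine SemiconjBy.exp_right ?_
    rw [SemiconjBy, mul_smul_comm, hθL, neg_smul, smul_neg, neg_mul, smul_mul_assoc]
  have hstar : SemiconjBy θ (star (exp (t • L))) (star (exp ((-t) • L))) := by
    have := congrArg star (hexp (-t)).eq
    rw [star_mul, star_mul, hθ, neg_neg] at this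
    exact this.symm
  rw [Dt_eq_mul_star, Dt_eq_mul_star]
  exact ((hexp t).mul_right hθD).mul_right hstar

end Dt

theorem stmt9_general {H : Type*} [NormedAddCommGroup H] [InnerProductSpace ℝ H] [CompleteSpace H]
    (L D : H →L[ℝ] H)
    (Dinv : ℝ → H →L[ℝ] H)
    (hDinv : ∀ t, Dt L D t * Dinv t = 1 ∧ Dinv t * Dt L D t = 1) :
    ∀ t : ℝ,
      (IsOpen (Jset Dinv t) ∧ Convex ℝ (Jset Dinv t)) ∧
      ∀ θ : H →L[ℝ] H,
        (∀ x y : H, ⟪θ x, θ y⟫ = ⟪x, y⟫) → θ * θ = 1 → θ * L = -(L * θ) → θ * D = D * θ →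
          Jset Dinv (-t) = Jset Dinv t ∧ ∀ α : ℝ, α ∈ Jset Dinv t ↔ 1 - α ∈ Jset Dinv t := by
  intro t
  refine ⟨⟨isOpen_Jset Dinv t, convex_Jset Dinv t⟩, fun θ hθ hθθ hθL hθD => ?_⟩
  have hθstar : star θ = θ := left_inv_eq_right_inv
    ((θ.inner_map_map_iff_adjoint_comp_self).1 hθ) hθθ
  have hθunit : IsUnit θ := ⟨⟨θ, θ, hθθ, hθθ⟩, rfl⟩
  have hθt : star θ * Dinv (-t) * θ = Dinv t := by
    refine star_mul_mul_eq_of_conj hθunit (hDinv t).1 (hDinv (-t)).2 ?_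
    rw [hθstar, (semiconjBy_Dt hθstar hθL hθD t).eq, mul_assoc, hθθ, mul_one]
  have hθ0 : star θ * Dinv 0 * θ = Dinv 0 := by
    refine star_mul_mul_eq_of_conj hθunit (hDinv 0).1 (hDinv 0).2 ?_
    rw [hθstar, Dt_zero, hθD, mul_assoc, hθθ, mul_one]
  have hJ : Jset Dinv (-t) = Jset Dinv t := Set.ext fun α =>
    (mem_Jset_iff Dinv (-t) α).trans (mem_Jset_iff_of_star_mul_mul hθunit hθ0 hθt α).symm
  refine ⟨hJ, fun α => ?_⟩
  have hE := isUnit_exp_smul L t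
  have hEt : star (exp (t • L)) * Dinv t * exp (t • L) = Dinv 0 :=
    star_mul_mul_eq_of_conj hE (hDinv 0).1 (hDinv t).2 (by rw [Dt_zero, Dt_eq_mul_star])
  have hE0 : star (exp (t • L)) * Dinv 0 * exp (t • L) = Dinv (-t) := by
    refine star_mul_mul_eq_of_conj hE (hDinv (-t)).1 (hDinv 0).2 ?_
    rw [← Dt_eq_mul_star, Dt_Dt, add_neg_cancel, Dt_zero]
  rw [mem_Jset_iff Dinv t (1 - α), AffineMap.lineMap_apply_one_sub,
    ← mem_Jset_iff_of_star_mul_mul hE hEt hE0, hJ]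

/-- `J_t` is an open interval (open convex subset of `ℝ`); if moreover
there is a unitary involution `θ` with `θL = −Lθ` and `θD = Dθ`, then `J_{−t} = J_t` and
`J_t` is symmetric about `1/2`: `α ∈ J_t ↔ 1−α ∈ J_t`. -/
theorem stmt9 {H : Type*} [NormedAddCommGroup H] [InnerProductSpace ℝ H] [CompleteSpace H]
    (L D : H →L[ℝ] H) (hD : IsSelfAdjoint D)
    (hDpos : ∃ c > 0, ∀ x : H, c * ‖x‖ ^ 2 ≤ ⟪x, D x⟫)
    (Dinv : ℝ → H →L[ℝ] H)
    (hDinv : ∀ t, Dt L D t * Dinv t = 1 ∧ Dinv t * Dt L D t = 1) :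
    ∀ t : ℝ,
      (IsOpen (Jset Dinv t) ∧ Convex ℝ (Jset Dinv t)) ∧
      ∀ θ : H →L[ℝ] H,
        (∀ x y : H, ⟪θ x, θ y⟫ = ⟪x, y⟫) → θ * θ = 1 → θ * L = -(L * θ) → θ * D = D * θ →
          Jset Dinv (-t) = Jset Dinv t ∧ ∀ α : ℝ, α ∈ Jset Dinv t ↔ 1 - α ∈ Jset Dinv t :=
  stmt9_general L D Dinv hDinv
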